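/- Let g_{2m+1}(x) = x·∏_{i=1}^{m}(x² - [2i]²) and g^{(2m+1)}(x) = g_{2m+1}(x)/[2m+1]!, where [n]! = [1][2]⋯[n] is the quantum factorial. Then for every ℓ ∈ ℤ and m ∈ ℕ, the evaluation g^{(2m+1)}([2ℓ]) lies in ℤ[q, q^{-1}]. In fact g^{(2m+1)}([2ℓ]) = \binom{ℓ+m}{2m+1}_q · ∏_{i=-m}^{m}(q^{ℓ+i} + q^{-ℓ-i}), where \binom{a}{n}_q denotes the Gaussian (q-)binomial coefficient. -/

import Mathlib

/-!
The identities `[x]² - [y]² = [x + y][x - y]` and `[2j] = [j](q^j + q^{-j})` factor the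
numerator `g_{2m+1}([2ℓ])` as `∏_{|i| ≤ m} [ℓ + i] (q^{ℓ+i} + q^{-ℓ-i})`. Divided by `[2m+1]!`,
the first product is the balanced `q`-binomial `\binom{ℓ+m}{2m+1}_q`. It is a Laurent
polynomial by the Pascal rule derived from `[a + b] = q^b [a] + q^{-a} [b]`, which expresses
`\binom{a±1}{n+1}_q` through binomials at `a` and so reaches every `a ∈ ℤ` from
`\binom{0}{n+1}_q = 0`.
-/

open Finset Polynomial

noncomputable def q : RatFunc ℚ := RatFunc.X

noncomputable def qa (n : ℤ) : RatFunc ℚ := (q ^ n - q ^ (-n)) / (q - q⁻¹)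

noncomputable def qfac (n : ℕ) : RatFunc ℚ := ∏ k ∈ Finset.range n, qa ((k : ℤ) + 1)

noncomputable def qbin (a : ℤ) (n : ℕ) : RatFunc ℚ :=
  ∏ k ∈ Finset.range n, qa (a - (k : ℤ)) / qa ((k : ℤ) + 1)

noncomputable def qa2 (n : ℤ) : RatFunc ℚ :=
  (q ^ (2 * n) - q ^ (-(2 * n))) / (q ^ (2 : ℤ) - q ^ (-2 : ℤ))

noncomputable def qbin2 (a : ℤ) (n : ℕ) : RatFunc ℚ :=
  ∏ k ∈ Finset.range n, qa2 (a - (k : ℤ)) / qa2 ((k : ℤ) + 1)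

noncomputable def LaurentZ : Subring (RatFunc ℚ) := Subring.closure {q, q⁻¹}

noncomputable def NatLaurent : Subsemiring (RatFunc ℚ) := Subsemiring.closure {q⁻¹}

/-- g^{(2m+1)}([2ℓ]) where g_{2m+1}(x) = x·∏_{i=1}^m (x² - [2i]²). -/
noncomputable def gOddEval (ℓ : ℤ) (m : ℕ) : RatFunc ℚ :=
  (qa (2 * ℓ) * ∏ i ∈ Finset.range m, (qa (2 * ℓ) ^ 2 - qa (2 * ((i : ℤ) + 1)) ^ 2))
    / qfac (2 * m + 1)

lemma q_ne_zero : q ≠ 0 := RatFunc.X_ne_zero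

lemma intDegree_q_zpow (n : ℤ) : (q ^ n).intDegree = n := by
  have hnat (k : ℕ) : (q ^ k).intDegree = k := by
    rw [q, ← RatFunc.algebraMap_X, ← map_pow, RatFunc.intDegree_polynomial, natDegree_X_pow]
  obtain ⟨k, rfl | rfl⟩ := n.eq_nat_or_neg
  · exact_mod_cast hnat k
  · rw [zpow_neg, RatFunc.intDegree_inv, zpow_natCast, hnat]

lemma q_zpow_injective : Function.Injective (q ^ · : ℤ → RatFunc ℚ) := fun a b h => by
  simpa only [intDegree_q_zpow] using congrArg RatFunc.intDegree h

lemma q_sub_q_inv_ne_zero : q - q⁻¹ ≠ 0 :=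
  sub_ne_zero.2 (by simpa using q_zpow_injective.ne (by decide : (1 : ℤ) ≠ -1))

lemma qa_ne_zero {n : ℤ} (hn : n ≠ 0) : qa n ≠ 0 :=
  div_ne_zero (sub_ne_zero.2 (q_zpow_injective.ne (by omega : n ≠ -n))) q_sub_q_inv_ne_zero

lemma qfac_ne_zero (n : ℕ) : qfac n ≠ 0 :=
  prod_ne_zero_iff.2 fun _ _ => qa_ne_zero (by omega)

lemma qfac_succ (n : ℕ) : qfac (n + 1) = qfac n * qa (n + 1) :=
  prod_range_succ _ _

lemma qa_add (a b : ℤ) : qa (a + b) = q ^ b * qa a + q ^ (-a) * qa b := by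
  simp only [qa, neg_add, zpow_add₀ q_ne_zero, zpow_neg]
  field_simp
  ring

lemma qa_sq_sub_qa_sq (x y : ℤ) : qa x ^ 2 - qa y ^ 2 = qa (x + y) * qa (x - y) := by
  rw [qa, qa, qa, qa, div_pow, div_pow, ← sub_div, div_mul_div_comm, ← sq]
  congr 1
  have hx := zpow_ne_zero x q_ne_zero
  have hy := zpow_ne_zero y q_ne_zero
  simp only [neg_add, neg_sub, zpow_add₀ q_ne_zero, zpow_sub₀ q_ne_zero, zpow_neg]
  field_simp
  ring

lemma qa_two_mul (j : ℤ) : qa (2 * j) = qa j * (q ^ j + q ^ (-j)) := by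
  simp only [qa, two_mul, neg_add, zpow_add₀ q_ne_zero, zpow_neg]
  field_simp
  ring

lemma qbin_eq_prod_div_qfac (a : ℤ) (n : ℕ) :
    qbin a n = (∏ k ∈ range n, qa (a - k)) / qfac n :=
  prod_div_distrib _ _

lemma qbin_succ_succ (a : ℤ) (n : ℕ) :
    qbin (a + 1) (n + 1) = q ^ ((n : ℤ) + 1) * qbin a (n + 1) + q ^ (n - a) * qbin a n := by
  have hnum : ∏ k ∈ range (n + 1), qa (a + 1 - k) = qa (a + 1) * ∏ k ∈ range n, qa (a - k) := by
    rw [prod_range_succ', mul_comm]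
    push_cast
    simp only [sub_zero, add_sub_add_right_eq_sub]
  simp only [qbin_eq_prod_div_qfac, hnum, prod_range_succ _ n, qfac_succ]
  have hsplit := qa_add (a - n) (n + 1)
  rw [show a - n + (n + 1) = a + 1 by ring, neg_sub] at hsplit
  rw [hsplit]
  field_simp [qfac_ne_zero, qa_ne_zero (by omega : (n : ℤ) + 1 ≠ 0)]

lemma zpow_q_mem_laurentZ (n : ℤ) : q ^ n ∈ LaurentZ := by
  have hq : q ∈ LaurentZ := Subring.subset_closure (by simp)
  have hq_inv : q⁻¹ ∈ LaurentZ := Subring.subset_closure (by simp)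
  obtain ⟨k, rfl | rfl⟩ := n.eq_nat_or_neg
  · exact_mod_cast pow_mem hq k
  · rw [zpow_neg, zpow_natCast, ← inv_pow]
    exact pow_mem hq_inv k

lemma qbin_zero_succ (n : ℕ) : qbin 0 (n + 1) = 0 :=
  prod_eq_zero (mem_range.2 n.succ_pos) (by simp [qa])

lemma qbin_mem_laurentZ (a : ℤ) (n : ℕ) : qbin a n ∈ LaurentZ := by
  induction n generalizing a with
  | zero => simp [qbin, one_mem]
  | succ n ih =>
    induction a using Int.induction_on with
    | zero => simp [qbin_zero_succ, zero_mem]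
    | succ a ha =>
      rw [qbin_succ_succ]
      exact add_mem (mul_mem (zpow_q_mem_laurentZ _) ha) (mul_mem (zpow_q_mem_laurentZ _) (ih _))
    | pred a ha =>
      have hpascal := qbin_succ_succ (-a - 1) n
      rw [sub_add_cancel] at hpascal
      have hdown : qbin (-a - 1) (n + 1) = q ^ (-((n : ℤ) + 1)) *
          (qbin (-a) (n + 1) - q ^ ((n : ℤ) - (-a - 1)) * qbin (-a - 1) n) := by
        rw [hpascal, zpow_neg]
        field_simp [zpow_ne_zero _ q_ne_zero]
        ring
      rw [hdown]
      exact mul_mem (zpow_q_mem_laurentZ _)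
        (sub_mem ha (mul_mem (zpow_q_mem_laurentZ _) (ih _)))

lemma qa_mul_prod_sq_sub (x y : ℤ) (m : ℕ) :
    qa x * ∏ i ∈ range m, (qa x ^ 2 - qa (y * ((i : ℤ) + 1)) ^ 2) =
      ∏ i ∈ Icc (-(m : ℤ)) m, qa (x + y * i) := by
  induction m with
  | zero => simp
  | succ m ih =>
    have hIcc : Icc (-((m : ℤ) + 1)) (m + 1) =
        insert (-((m : ℤ) + 1)) (insert ((m : ℤ) + 1) (Icc (-(m : ℤ)) m)) := by
      ext i; simp only [mem_Icc, mem_insert]; omega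
    push_cast
    rw [hIcc, prod_insert (by simp only [mem_insert, mem_Icc]; omega),
      prod_insert (by simp only [mem_Icc]; omega), prod_range_succ, ← mul_assoc, ih,
      qa_sq_sub_qa_sq]
    ring_nf

lemma prod_range_two_mul_add_one_eq_prod_Icc {M : Type*} [CommMonoid M] (f : ℤ → M) (m : ℕ) :
    ∏ k ∈ range (2 * m + 1), f (m - k) = ∏ i ∈ Icc (-(m : ℤ)) m, f i := by
  apply prod_nbij' (fun k : ℕ => (m : ℤ) - k) (fun i : ℤ => ((m : ℤ) - i).toNat)
  all_goals intro _ _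
  all_goals simp_all only [mem_range, mem_Icc]
  all_goals omega

theorem stmt2 (ℓ : ℤ) (m : ℕ) :
    gOddEval ℓ m ∈ LaurentZ ∧
    gOddEval ℓ m = qbin (ℓ + m) (2 * m + 1)
      * ∏ i ∈ Finset.Icc (-(m : ℤ)) (m : ℤ), (q ^ (ℓ + i) + q ^ (-(ℓ + i))) := by
  have heq : gOddEval ℓ m = qbin (ℓ + m) (2 * m + 1)
      * ∏ i ∈ Icc (-(m : ℤ)) m, (q ^ (ℓ + i) + q ^ (-(ℓ + i))) := by
    have hnum : ∏ k ∈ range (2 * m + 1), qa (ℓ + m - k) = ∏ i ∈ Icc (-(m : ℤ)) m, qa (ℓ + i) := by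
      simp_rw [add_sub_assoc]
      exact prod_range_two_mul_add_one_eq_prod_Icc (fun i => qa (ℓ + i)) m
    rw [gOddEval, qa_mul_prod_sq_sub, qbin_eq_prod_div_qfac, hnum, div_mul_eq_mul_div,
      ← prod_mul_distrib]
    simp_rw [← mul_add, qa_two_mul]
  exact ⟨heq ▸ mul_mem (qbin_mem_laurentZ _ _)
    (prod_mem fun i _ => add_mem (zpow_q_mem_laurentZ _) (zpow_q_mem_laurentZ _)), heq⟩
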